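/- Let r, α, β, γ, μ, τ, ω > 0 with ω > τ and γ(μα − β) > 0, let p, q ≥ 0, let z be real with 0 < |z| ≤ 1, and assume r² < 1. Then, for ν = 1, the (p,q)-Mathieu-type series with the sequence a_k = (k!)^γ satisfies S_{μ,1,τ,ω}^{(α,β)}(r; {(k!)^γ}; p,q; z) = (2zτ/ω) Σ_{m=0}^∞ ((μ)_m/m!) (−r²)^m E_{γ((μ+m)α−β), 1, 2; p,q}^{(1, τ+1, ω+1)}(z). -/

import Mathlib

open Real MeasureTheory Set Filter

/-- Pochhammer symbol `(a)_n = Γ(a+n)/Γ(a)`. -/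
noncomputable def poch (a : ℝ) (n : ℕ) : ℝ := Real.Gamma (a + n) / Real.Gamma a

/-- Euler beta function. -/
noncomputable def betaE (x y : ℝ) : ℝ := Real.Gamma x * Real.Gamma y / Real.Gamma (x + y)

/-- Extended beta function `B_{p,q}(x,y)`. -/
noncomputable def betaPQ (p q x y : ℝ) : ℝ :=
  ∫ t in Ioo (0:ℝ) 1, t ^ (x - 1) * (1 - t) ^ (y - 1) * Real.exp (-p / t - q / (1 - t))

/-- The `(p,q)`-Mittag-Leffler function `E_{δ,θ,σ;p,q}^{(lam,τ,ω)}(z)`. -/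
noncomputable def mlPQ (δ θ σ lam τ ω p q z : ℝ) : ℝ :=
  ∑' k : ℕ, poch lam k * betaPQ p q (τ + (k : ℝ)) (ω - τ) * z ^ k /
    (Real.Gamma (θ * (k : ℝ) + σ) ^ δ * betaE τ (ω - τ) * (Nat.factorial k : ℝ))

/-- The `(p,q)`-Mathieu-type power series attached to the sequence `a`. -/
noncomputable def mathieuPQ (μ ν τ ω α β r p q z : ℝ) (a : ℕ → ℝ) : ℝ :=
  ∑' n : ℕ, 2 * a (n + 1) ^ β * poch ν (n + 1) *
      betaPQ p q (τ + ((n : ℝ) + 1)) (ω - τ) * z ^ (n + 1) /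
    ((Nat.factorial (n + 1) : ℝ) * betaE τ (ω - τ) * (a (n + 1) ^ α + r ^ 2) ^ μ)

/-!
For `n ≥ 1` the number `X = (n!)^{γα}` is at least `1 > r²`, so every term of the Mathieu series
can be expanded by the binomial series `(X + r²)^{-μ} = Σ_m (μ)_m/m! (-r²)^m X^{-μ-m}`.
The resulting double series is absolutely convergent: `B_{p,q}(τ+n, ω-τ)` is bounded by the
beta integral of `(τ, ω-τ)` and `|z| ≤ 1`, so it is dominated by
`Σ_n (n!)^{-γ(μα-β)} · Σ_m (μ)_m/m! r^{2m}`. Exchanging the summations, the series over `n` for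
fixed `m` is `2zτ/ω` times a `(p,q)`-Mittag-Leffler function, because
`B(τ+1, ω-τ) = (τ/ω) B(τ, ω-τ)` and `Γ(n+2) = (n+1)!`.
-/

open scoped Nat Topology

lemma poch_pos {a : ℝ} (ha : 0 < a) (n : ℕ) : 0 < poch a n :=
  div_pos (Real.Gamma_pos_of_pos (by positivity)) (Real.Gamma_pos_of_pos ha)

lemma poch_one (n : ℕ) : poch 1 n = n ! := by
  rw [poch, add_comm, Real.Gamma_nat_eq_factorial, Real.Gamma_one, div_one]

lemma poch_eq_eval_ascPochhammer {a : ℝ} (ha : ∀ k : ℕ, a ≠ -k) (n : ℕ) :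
    poch a n = (ascPochhammer ℝ n).eval a := by
  induction n with
  | zero => simp [poch, Real.Gamma_ne_zero ha]
  | succ n ih =>
    have hn : a + n ≠ 0 := fun h => ha n (by linarith)
    rw [ascPochhammer_succ_eval, ← ih, poch, poch, Nat.cast_succ, ← add_assoc,
      Real.Gamma_add_one hn]
    ring

lemma poch_div_factorial_eq_choose {a : ℝ} (ha : ∀ k : ℕ, a ≠ -k) (n : ℕ) :
    poch a n / n ! = Ring.choose (a + n - 1) n := by
  rw [← Ring.multichoose_eq, poch_eq_eval_ascPochhammer ha,
    ← Polynomial.ascPochhammer_smeval_eq_eval, ← Ring.factorial_nsmul_multichoose_eq_ascPochhammer,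
    nsmul_eq_mul]
  field_simp

lemma hasSum_poch_div_factorial_mul_pow {a x : ℝ} (ha : ∀ k : ℕ, a ≠ -k) (hx : |x| < 1) :
    HasSum (fun m => poch a m / m ! * x ^ m) ((1 - x) ^ (-a)) := by
  have hball : x ∈ Metric.eball (0 : ℝ) 1 := by
    rwa [Metric.mem_eball, edist_zero_right, ← ofReal_norm, ENNReal.ofReal_lt_one]
  have := (Real.one_div_one_sub_rpow_hasFPowerSeriesOnBall_zero a).hasSum hball
  simp only [FormalMultilinearSeries.ofScalars_apply_eq, smul_eq_mul, zero_add] at this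
  rw [Real.rpow_neg (by linarith [le_abs_self x]), ← one_div]
  simpa only [poch_div_factorial_eq_choose ha] using this

lemma hasSum_add_rpow_neg {a u X : ℝ} (ha : ∀ k : ℕ, a ≠ -k) (hX : 0 < X) (hu : |u| < X) :
    HasSum (fun m => poch a m / m ! * (-u) ^ m * X ^ (-a - m)) ((X + u) ^ (-a)) := by
  have hux : |-u / X| < 1 := by
    rwa [abs_div, abs_neg, abs_of_pos hX, div_lt_one hX]
  have h := (hasSum_poch_div_factorial_mul_pow ha hux).mul_left (X ^ (-a))
  have hsum : X + u = X * (1 - -u / X) := by field_simp; ring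
  rw [hsum, Real.mul_rpow hX.le (by linarith [le_abs_self (-u / X)])]
  refine h.congr_fun fun m => ?_
  rw [Real.rpow_sub hX, Real.rpow_natCast, div_pow]
  ring

lemma ne_neg_natCast_of_pos {a : ℝ} (ha : 0 < a) (k : ℕ) : a ≠ -k := by
  have := k.cast_nonneg (α := ℝ)
  linarith

theorem tsum_mul_add_rpow_neg {a u : ℝ} {A X : ℕ → ℝ} (ha : 0 < a) (hu : |u| < 1)
    (hX : ∀ n, 1 ≤ X n) (hA : Summable fun n => |A n| * X n ^ (-a)) :
    ∑' n, A n * (X n + u) ^ (-a) =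
      ∑' m : ℕ, poch a m / m ! * (-u) ^ m * ∑' n, A n * X n ^ (-a - m) := by
  have ha' := ne_neg_natCast_of_pos ha
  set g : ℕ → ℕ → ℝ := fun n m => A n * (poch a m / m ! * (-u) ^ m * X n ^ (-a - m))
  have hrow (n : ℕ) : HasSum (g n) (A n * (X n + u) ^ (-a)) :=
    (hasSum_add_rpow_neg ha' (by linarith [hX n]) (by linarith [hX n])).mul_left (A n)
  have hbound (n m : ℕ) : |g n m| ≤ |A n| * X n ^ (-a) * (poch a m / m ! * |u| ^ m) := by
    have hXn : 0 < X n := by linarith [hX n]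
    have hXm : X n ^ (-a - m) ≤ X n ^ (-a) :=
      Real.rpow_le_rpow_of_exponent_le (hX n) (by linarith [m.cast_nonneg (α := ℝ)])
    have hpoch := poch_pos ha m
    calc |g n m| = |A n| * (poch a m / m ! * |u| ^ m) * X n ^ (-a - m) := by
          simp only [g, abs_mul, abs_div, abs_pow, abs_neg, abs_of_pos hpoch, Nat.abs_cast,
            abs_of_pos (Real.rpow_pos_of_pos hXn _)]
          ring
      _ ≤ |A n| * (poch a m / m ! * |u| ^ m) * X n ^ (-a) :=
          mul_le_mul_of_nonneg_left hXm (by positivity)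
      _ = _ := by ring
  have hsummable : Summable (Function.uncurry g) := by
    refine Summable.of_norm_bounded (g := fun nm : ℕ × ℕ =>
      |A nm.1| * X nm.1 ^ (-a) * (poch a nm.2 / nm.2 ! * |u| ^ nm.2)) ?_ fun nm => hbound nm.1 nm.2
    have hbinom : Summable fun m : ℕ => poch a m / m ! * |u| ^ m :=
      (hasSum_poch_div_factorial_mul_pow ha' (by rwa [abs_abs])).summable
    refine hA.mul_of_nonneg hbinom
      (fun n => mul_nonneg (abs_nonneg _) (Real.rpow_nonneg (by linarith [hX n]) _)) fun m => ?_
    have := poch_pos ha m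
    positivity
  calc ∑' n, A n * (X n + u) ^ (-a) = ∑' n, ∑' m, g n m :=
        tsum_congr fun n => (hrow n).tsum_eq.symm
    _ = ∑' m, ∑' n, g n m := hsummable.tsum_comm.symm
    _ = _ := tsum_congr fun m => by
      simp only [g, ← tsum_mul_left]
      exact tsum_congr fun n => by ring

lemma integrableOn_rpow_mul_one_sub_rpow {x y : ℝ} (hx : 0 < x) (hy : 0 < y) :
    IntegrableOn (fun t : ℝ => t ^ (x - 1) * (1 - t) ^ (y - 1)) (Ioo 0 1) := by
  have h := IntegrableOn.mono_set (Complex.betaIntegral_convergent (u := x) (v := y)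
    (by simpa using hx) (by simpa using hy)).1.norm Ioo_subset_Ioc_self
  refine h.congr_fun (fun t ⟨ht0, ht1⟩ => ?_) measurableSet_Ioo
  have h1t : (1 - (t : ℂ)) = ((1 - t : ℝ) : ℂ) := by push_cast; ring
  dsimp only
  rw [norm_mul, h1t, Complex.norm_cpow_eq_rpow_re_of_pos ht0,
    Complex.norm_cpow_eq_rpow_re_of_pos (by linarith)]
  simp

lemma exp_neg_div_sub_div_le_one {p q t : ℝ} (hp : 0 ≤ p) (hq : 0 ≤ q) (ht : t ∈ Ioo (0 : ℝ) 1) :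
    Real.exp (-p / t - q / (1 - t)) ≤ 1 := by
  have : 0 ≤ p / t := div_nonneg hp ht.1.le
  have : 0 ≤ q / (1 - t) := div_nonneg hq (by linarith [ht.2])
  rw [Real.exp_le_one_iff, neg_div]
  linarith

lemma betaPQ_nonneg (p q x y : ℝ) : 0 ≤ betaPQ p q x y :=
  setIntegral_nonneg measurableSet_Ioo fun t ⟨ht0, ht1⟩ => by
    have := Real.rpow_nonneg ht0.le (x - 1)
    have := Real.rpow_nonneg (sub_nonneg.2 ht1.le) (y - 1)
    positivity

lemma betaPQ_le {p q x x' y : ℝ} (hp : 0 ≤ p) (hq : 0 ≤ q) (hx' : 0 < x') (hx : x' ≤ x)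
    (hy : 0 < y) : betaPQ p q x y ≤ ∫ t in Ioo (0:ℝ) 1, t ^ (x' - 1) * (1 - t) ^ (y - 1) := by
  refine integral_mono_of_nonneg ?_ (integrableOn_rpow_mul_one_sub_rpow hx' hy) ?_
  all_goals refine ae_restrict_of_forall_mem measurableSet_Ioo fun t ht => ?_
  all_goals have h1t := Real.rpow_nonneg (sub_nonneg.2 ht.2.le) (y - 1)
  · have := Real.rpow_nonneg ht.1.le (x - 1)
    simp only [Pi.zero_apply]
    positivity
  · calc t ^ (x - 1) * (1 - t) ^ (y - 1) * Real.exp (-p / t - q / (1 - t))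
        ≤ t ^ (x - 1) * (1 - t) ^ (y - 1) := by
          have := Real.rpow_nonneg ht.1.le (x - 1)
          exact mul_le_of_le_one_right (by positivity) (exp_neg_div_sub_div_le_one hp hq ht)
      _ ≤ t ^ (x' - 1) * (1 - t) ^ (y - 1) :=
          mul_le_mul_of_nonneg_right
            (Real.rpow_le_rpow_of_exponent_ge ht.1 ht.2.le (by linarith)) h1t

lemma summable_factorial_rpow_neg {c : ℝ} (hc : 0 < c) :
    Summable fun n : ℕ => (n ! : ℝ) ^ (-c) := by
  have hratio (n : ℕ) : ‖((n + 1)! : ℝ) ^ (-c)‖ / ‖(n ! : ℝ) ^ (-c)‖ = ((n : ℝ) + 1) ^ (-c) := by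
    have hn : (0 : ℝ) < n ! ^ (-c) := Real.rpow_pos_of_pos (by positivity) _
    rw [Real.norm_of_nonneg (by positivity), Real.norm_of_nonneg hn.le, Nat.factorial_succ,
      Nat.cast_mul, Real.mul_rpow (by positivity) (by positivity), mul_div_cancel_right₀ _ hn.ne']
    push_cast
    rfl
  refine summable_of_ratio_test_tendsto_lt_one zero_lt_one
    (Eventually.of_forall fun n => (Real.rpow_pos_of_pos (by positivity) _).ne') ?_
  simp_rw [hratio]
  exact (tendsto_rpow_neg_atTop hc).comp (tendsto_natCast_atTop_atTop.atTop_add tendsto_const_nhds)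

lemma betaE_add_one_left {x y : ℝ} (hx : x ≠ 0) (hxy : x + y ≠ 0) :
    betaE (x + 1) y = x / (x + y) * betaE x y := by
  rw [betaE, betaE, add_right_comm, Real.Gamma_add_one hx, Real.Gamma_add_one hxy]
  simp only [div_eq_mul_inv, mul_inv]
  ring

lemma mul_mlPQ_one_two_one {τ ω : ℝ} (hτ : τ ≠ 0) (hω : ω ≠ 0) (δ p q z : ℝ) :
    2 * z * τ / ω * mlPQ δ 1 2 1 (τ + 1) (ω + 1) p q z =
      ∑' n : ℕ, 2 * ((n + 1)! : ℝ) ^ (-δ) * betaPQ p q (τ + ((n : ℝ) + 1)) (ω - τ) *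
        z ^ (n + 1) / betaE τ (ω - τ) := by
  have hB : betaE (τ + 1) (ω - τ) = τ / ω * betaE τ (ω - τ) := by
    rw [betaE_add_one_left hτ (by rwa [add_sub_cancel]), add_sub_cancel]
  rw [mlPQ, ← tsum_mul_left, show ω + 1 - (τ + 1) = ω - τ by ring, hB]
  refine tsum_congr fun n => ?_
  have hΓ : Real.Gamma (1 * (n : ℝ) + 2) = ((n + 1)! : ℝ) := by
    rw [← Real.Gamma_nat_eq_factorial]
    push_cast
    ring_nf
  rw [hΓ, poch_one, Real.rpow_neg (by positivity),
    show τ + 1 + (n : ℝ) = τ + ((n : ℝ) + 1) by ring, pow_succ]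
  field_simp

lemma mathieuPQ_factorial_rpow (μ τ ω α β γ r p q z : ℝ) :
    mathieuPQ μ 1 τ ω α β r p q z (fun k => (k ! : ℝ) ^ γ) =
      ∑' n : ℕ, 2 * ((n + 1)! : ℝ) ^ (γ * β) * betaPQ p q (τ + ((n : ℝ) + 1)) (ω - τ) *
        z ^ (n + 1) / betaE τ (ω - τ) * (((n + 1)! : ℝ) ^ (γ * α) + r ^ 2) ^ (-μ) := by
  refine tsum_congr fun n => ?_
  have hF : (0 : ℝ) < (n + 1)! := by positivity
  rw [poch_one, ← Real.rpow_mul hF.le, ← Real.rpow_mul hF.le, Real.rpow_neg (by positivity)]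
  field_simp

lemma summable_mathieuPQ_factorial_rpow_majorant {μ τ ω α β γ p q z : ℝ} (hp : 0 ≤ p) (hq : 0 ≤ q)
    (hτ : 0 < τ) (hτω : τ < ω) (hz : |z| ≤ 1) (hexp : 0 < γ * (μ * α - β)) :
    Summable fun n : ℕ => |2 * ((n + 1)! : ℝ) ^ (γ * β) * betaPQ p q (τ + ((n : ℝ) + 1)) (ω - τ) *
      z ^ (n + 1) / betaE τ (ω - τ)| * (((n + 1)! : ℝ) ^ (γ * α)) ^ (-μ) := by
  set I := ∫ t in Ioo (0:ℝ) 1, t ^ (τ - 1) * (1 - t) ^ (ω - τ - 1)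
  have hmajorant := ((summable_nat_add_iff 1).2 (summable_factorial_rpow_neg hexp)).mul_left
    (2 * I / |betaE τ (ω - τ)|)
  refine hmajorant.of_nonneg_of_le (fun n => by positivity) fun n => ?_
  have hF : (0 : ℝ) < (n + 1)! := by positivity
  have hpow : ((n + 1)! : ℝ) ^ (γ * β) * (((n + 1)! : ℝ) ^ (γ * α)) ^ (-μ) =
      ((n + 1)! : ℝ) ^ (-(γ * (μ * α - β))) := by
    rw [← Real.rpow_mul hF.le, ← Real.rpow_add hF]
    ring_nf
  have hbeta : betaPQ p q (τ + ((n : ℝ) + 1)) (ω - τ) * |z| ^ (n + 1) ≤ I :=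
    mul_le_of_le_one_right (betaPQ_nonneg _ _ _ _) (pow_le_one₀ (abs_nonneg z) hz)
      |>.trans (betaPQ_le hp hq hτ (by linarith [n.cast_nonneg (α := ℝ)]) (sub_pos.2 hτω))
  calc _ = 2 * (betaPQ p q (τ + ((n : ℝ) + 1)) (ω - τ) * |z| ^ (n + 1)) / |betaE τ (ω - τ)| *
          (((n + 1)! : ℝ) ^ (γ * β) * (((n + 1)! : ℝ) ^ (γ * α)) ^ (-μ)) := by
        simp only [abs_div, abs_mul, abs_pow, abs_two, abs_of_nonneg (betaPQ_nonneg _ _ _ _),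
          abs_of_pos (Real.rpow_pos_of_pos hF _)]
        ring
    _ ≤ _ := by
        rw [hpow]
        gcongr

theorem statement15_general (r α β γ μ τ ω p q z : ℝ)
    (hα : 0 < α) (hγ : 0 < γ) (hμ : 0 < μ)
    (hτ : 0 < τ) (hω : 0 < ω) (hτω : τ < ω)
    (hexp : 0 < γ * (μ * α - β)) (hp : 0 ≤ p) (hq : 0 ≤ q)
    (hz : |z| ≤ 1) (hr1 : r ^ 2 < 1) :
    mathieuPQ μ 1 τ ω α β r p q z (fun k => ((Nat.factorial k : ℝ)) ^ γ) =
      2 * z * τ / ω *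
        ∑' m : ℕ, poch μ m / (Nat.factorial m : ℝ) * (-r ^ 2) ^ m *
          mlPQ (γ * ((μ + (m : ℝ)) * α - β)) 1 2 1 (τ + 1) (ω + 1) p q z := by
  have hX (n : ℕ) : 1 ≤ ((n + 1)! : ℝ) ^ (γ * α) :=
    Real.one_le_rpow (Nat.one_le_cast.2 (Nat.factorial_pos _)) (by positivity)
  rw [mathieuPQ_factorial_rpow, tsum_mul_add_rpow_neg hμ (by rwa [abs_of_nonneg (sq_nonneg r)]) hX
    (summable_mathieuPQ_factorial_rpow_majorant hp hq hτ hτω hz hexp), ← tsum_mul_left]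
  refine tsum_congr fun m => ?_
  rw [mul_left_comm (2 * z * τ / ω), mul_mlPQ_one_two_one hτ.ne' hω.ne']
  refine congrArg _ (tsum_congr fun n => ?_)
  have hF : (0 : ℝ) < (n + 1)! := by positivity
  have hpow : ((n + 1)! : ℝ) ^ (-(γ * ((μ + m) * α - β))) =
      ((n + 1)! : ℝ) ^ (γ * β) * (((n + 1)! : ℝ) ^ (γ * α)) ^ (-μ - m) := by
    rw [← Real.rpow_mul hF.le, ← Real.rpow_add hF]
    ring_nf
  rw [hpow]
  ring

theorem statement15 (r α β γ μ τ ω p q z : ℝ)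
    (hr : 0 < r) (hα : 0 < α) (hβ : 0 < β) (hγ : 0 < γ) (hμ : 0 < μ)
    (hτ : 0 < τ) (hω : 0 < ω) (hτω : τ < ω)
    (hexp : 0 < γ * (μ * α - β)) (hp : 0 ≤ p) (hq : 0 ≤ q)
    (hz0 : 0 < |z|) (hz : |z| ≤ 1) (hr1 : r ^ 2 < 1) :
    mathieuPQ μ 1 τ ω α β r p q z (fun k => ((Nat.factorial k : ℝ)) ^ γ) =
      2 * z * τ / ω *
        ∑' m : ℕ, poch μ m / (Nat.factorial m : ℝ) * (-r ^ 2) ^ m *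
          mlPQ (γ * ((μ + (m : ℝ)) * α - β)) 1 2 1 (τ + 1) (ω + 1) p q z :=
  statement15_general r α β γ μ τ ω p q z hα hγ hμ hτ hω hτω hexp hp hq hz hr1
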